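/- The quadratic system dx/dt = 2(1 + 2x - 2ax^2 + 6xy), dy/dt = 8 - 3a - 14ax - 2axy - 8y^2 admits the invariant algebraic curve g = x^2 y^2 + xy + a x^3 - x^2 + x + 1/4 = 0; that is, there exists a polynomial cofactor K(x,y) of degree at most 1 such that P·∂g/∂x + Q·∂g/∂y = K·g identically in x, y, a. -/
import Mathlib


open MvPolynomial

noncomputable section

namespace Stmt15

def x : MvPolynomial (Fin 3) ℚ := X 0
def y : MvPolynomial (Fin 3) ℚ := X 1
def a : MvPolynomial (Fin 3) ℚ := X 2

/-- P = 2(1 + 2x - 2ax² + 6xy) -/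
def P : MvPolynomial (Fin 3) ℚ := 2 * (1 + 2 * x - 2 * a * x^2 + 6 * x * y)

/-- Q = 8 - 3a - 14ax - 2axy - 8y² -/
def Qv : MvPolynomial (Fin 3) ℚ := 8 - 3 * a - 14 * a * x - 2 * a * x * y - 8 * y^2

/-- the invariant quartic curve -/
def g : MvPolynomial (Fin 3) ℚ :=
    x^2 * y^2 + x * y + a * x^3 - x^2 + x + C ((1 : ℚ)/4)

/-- there is a cofactor `K(x,y)` of degree at most 1 in `x, y` with
`P·g_x + Q·g_y = K·g`. -/
theorem invariant_curve :
    ∃ K : MvPolynomial (Fin 3) ℚ,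
      (∀ d ∈ K.support, d 0 + d 1 ≤ 1) ∧
      P * pderiv 0 g + Qv * pderiv 1 g = K * g := by
  refine ⟨C 8 + C 8 * y + C (-12) * (a * x), ?_, ?_⟩
  · intro d hd
    have h1 : (C 8 + C 8 * y + C (-12) * (a * x) : MvPolynomial (Fin 3) ℚ)
        = monomial 0 8 + monomial (Finsupp.single 1 1) 8
          + monomial (Finsupp.single 2 1 + Finsupp.single 0 1) (-12) := by
      rw [x, y, a, ← mul_assoc, C_mul_X_eq_monomial, monomial_add_single, pow_one,
        C_mul_X_eq_monomial, C_apply]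
    rw [h1] at hd
    rcases Finset.mem_union.1 (MvPolynomial.support_add hd) with h2 | h2
    · rcases Finset.mem_union.1 (MvPolynomial.support_add h2) with h3 | h3
      · have := MvPolynomial.support_monomial_subset h3
        simp only [Finset.mem_singleton] at this
        subst this; simp
      · have := MvPolynomial.support_monomial_subset h3
        simp only [Finset.mem_singleton] at this
        subst this; simp
    · have := MvPolynomial.support_monomial_subset h2
      simp only [Finset.mem_singleton] at this
      subst this; simp [Finsupp.add_apply]
  · have hC : (4 : MvPolynomial (Fin 3) ℚ) * C ((1:ℚ)/4) = 1 := by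
      rw [show (4 : MvPolynomial (Fin 3) ℚ) = C 4 from (map_ofNat C 4).symm, ← C_mul]
      norm_num
    simp only [P, Qv, g, x, y, a, map_add, map_sub, map_mul, pderiv_C, pderiv_X,
      pderiv_mul, pderiv_pow, map_pow, map_ofNat, map_neg,
      Pi.single_apply, Fin.isValue, show (1 : Fin 3) ≠ 0 from by decide,
      show (2 : Fin 3) ≠ 0 from by decide, show (0 : Fin 3) ≠ 1 from by decide,
      show (2 : Fin 3) ≠ 1 from by decide, if_true, if_neg, ite_false, ite_true,
      reduceIte, mul_zero, zero_mul, mul_one, one_mul, add_zero, zero_add]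
    linear_combination (-(2 + 2 * (X 1 : MvPolynomial (Fin 3) ℚ) - 3 * (X 2 * X 0))) * hC

end Stmt15
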